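/- For an insertion datum π for (Γ₁, Γ₂), the stabilizer of π under the action of Aut(Γ₁) × Aut(Γ₂) is in bijection with Aut(Γ_π, π), the group of automorphisms of the resulting graph Γ_π that fix the insertion datum π. In particular |Stab(π)| = |Aut(Γ_π, π)|. -/

import Mathlib

/-!
An automorphism of `Γ_π` that maps the inserted copy of `Γ₂` into itself is, by finiteness, a
sum `σ ⊕ τ` of permutations of the two vertex sets. Since `c1` is a sink, `σ` extends to an
automorphism `ρ₁` of `Γ₁` fixing `c1`, and preservation of the redirected edges `a → π a`
says exactly that `(ρ₁, τ)` fixes `π`. Conversely every pair in the stabilizer induces such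
a sum, and the two constructions are mutually inverse.
-/

/-- An admissible graph: finite directed acyclic graph, boundary vertices are sinks,
internal vertices have exactly two outgoing edges. -/
def IsAdm {V : Type} [Fintype V] [DecidableEq V]
    (edge : V → V → Bool) (bd : Finset V) : Prop :=
  (∀ v : V, ¬ Relation.TransGen (fun a b => edge a b = true) v v) ∧
  (∀ v ∈ bd, ∀ w, edge v w = false) ∧
  (∀ v ∉ bd, (Finset.univ.filter (fun w => edge v w = true)).card = 2)

/-- The edge relation of the quotient graph `Γ/Θ`, obtained by collapsing the
vertex set `T` of the subgraph `Θ` to a single new boundary vertex `none`. -/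
def qedge {V : Type} [Fintype V] [DecidableEq V] (edge : V → V → Bool) (T : Finset V) :
    Option {v : V // v ∉ T} → Option {v : V // v ∉ T} → Bool
  | some a, some b => edge a.1 b.1
  | some a, none => decide (∃ t ∈ T, edge a.1 t = true)
  | none, _ => false

/-- The boundary of the quotient graph `Γ/Θ`: the surviving boundary vertices of `Γ`
together with the new boundary vertex `none`. -/
def qbd {V : Type} [Fintype V] [DecidableEq V] (bd T : Finset V) :
    Finset (Option {v : V // v ∉ T}) :=
  Finset.univ.filter (fun x => x = none ∨ ∃ a : {v : V // v ∉ T}, x = some a ∧ a.1 ∈ bd)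

/-- The edge relation of the graph obtained by inserting the graph `Γ₂` (edges `e₂`) at
the boundary vertex `c1` of the graph `Γ₁` (edges `e₁`), redirecting each edge of `Γ₁`
entering `c1` according to the insertion datum `π`. -/
def edgeIns {V₁ V₂ : Type} [DecidableEq V₂]
    (e₁ : V₁ → V₁ → Bool) (e₂ : V₂ → V₂ → Bool) (c1 : V₁)
    (π : {a : V₁ // e₁ a c1 = true} → V₂) :
    ({v : V₁ // v ≠ c1} ⊕ V₂) → ({v : V₁ // v ≠ c1} ⊕ V₂) → Bool
  | .inl a, .inl b => e₁ a.1 b.1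
  | .inl a, .inr w => if h : e₁ a.1 c1 = true then decide (π ⟨a.1, h⟩ = w) else false
  | .inr w, .inr x => e₂ w x
  | .inr _, .inl _ => false

/-- The automorphism group of a graph with two ordered boundary vertices `x, y`:
edge-preserving permutations of the vertices fixing the boundary. -/
def AutG {V : Type} (edge : V → V → Bool) (x y : V) : Type :=
  {φ : V ≃ V // (∀ a b, edge (φ a) (φ b) = edge a b) ∧ φ x = x ∧ φ y = y}

/-- Two insertion data `π, π'` for the pair `(Γ₁, Γ₂)` have the same type: the resulting
graphs `Γ_{π'}` and `Γ_π` are isomorphic (by an isomorphism respecting the three ordered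
boundary vertices of the result). -/
def SameType {V₁ V₂ : Type} [DecidableEq V₂]
    (e₁ : V₁ → V₁ → Bool) (e₂ : V₂ → V₂ → Bool) (c1 c2 : V₁) (hc : c1 ≠ c2) (d1 d2 : V₂)
    (π' π : {a : V₁ // e₁ a c1 = true} → V₂) : Prop :=
  ∃ φ : ({v : V₁ // v ≠ c1} ⊕ V₂) ≃ ({v : V₁ // v ≠ c1} ⊕ V₂),
    (∀ u v, edgeIns e₁ e₂ c1 π' (φ u) (φ v) = edgeIns e₁ e₂ c1 π u v) ∧
    φ (.inr d1) = .inr d1 ∧ φ (.inr d2) = .inr d2 ∧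
    φ (.inl ⟨c2, Ne.symm hc⟩) = .inl ⟨c2, Ne.symm hc⟩

/-- The group `Aut(Γ_π, π)` of automorphisms of the resulting graph `Γ_π` which fix the
insertion datum `π`: they preserve the inserted copy of `Γ₂` and commute with `π`. -/
def AutFix {V₁ V₂ : Type} [DecidableEq V₂]
    (e₁ : V₁ → V₁ → Bool) (e₂ : V₂ → V₂ → Bool) (c1 c2 : V₁) (hc : c1 ≠ c2) (d1 d2 : V₂)
    (π : {a : V₁ // e₁ a c1 = true} → V₂) : Type :=
  {φ : ({v : V₁ // v ≠ c1} ⊕ V₂) ≃ ({v : V₁ // v ≠ c1} ⊕ V₂) //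
    (∀ u v, edgeIns e₁ e₂ c1 π (φ u) (φ v) = edgeIns e₁ e₂ c1 π u v) ∧
    φ (.inr d1) = .inr d1 ∧ φ (.inr d2) = .inr d2 ∧
    φ (.inl ⟨c2, Ne.symm hc⟩) = .inl ⟨c2, Ne.symm hc⟩ ∧
    (∀ w : V₂, ∃ x : V₂, φ (.inr w) = .inr x) ∧
    (∀ (a b : {v : V₁ // v ≠ c1}) (ha : e₁ a.1 c1 = true) (hb : e₁ b.1 c1 = true),
      φ (.inl a) = .inl b → φ (.inr (π ⟨a.1, ha⟩)) = .inr (π ⟨b.1, hb⟩))}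

/-- The action of `Aut(Γ₁) × Aut(Γ₂)` on insertion data: `(ρ₁, ρ₂)·π = ρ₂ ∘ π ∘ ρ₁⁻¹`. -/
def actIns {V₁ V₂ : Type} (e₁ : V₁ → V₁ → Bool) (c1 c2 : V₁)
    (ρ₁ : AutG e₁ c1 c2) (ρ₂ : V₂ ≃ V₂)
    (π : {a : V₁ // e₁ a c1 = true} → V₂) :
    {a : V₁ // e₁ a c1 = true} → V₂ :=
  fun a => ρ₂ (π ⟨ρ₁.1.symm a.1, by
    have h := ρ₁.2.1 (ρ₁.1.symm a.1) c1
    rw [ρ₁.1.apply_symm_apply] at h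
    conv at h => rw [show ρ₁.1 c1 = c1 from ρ₁.2.2.1]
    rw [← h]
    exact a.2⟩)

namespace AutG

variable {V : Type} {edge : V → V → Bool} {x y : V}

lemma apply_ne_iff (ρ : AutG edge x y) {v : V} : ρ.1 v ≠ x ↔ v ≠ x :=
  not_congr ⟨fun h => ρ.1.injective (h.trans ρ.2.2.1.symm), fun h => h ▸ ρ.2.2.1⟩

lemma edge_apply_left (ρ : AutG edge x y) (a : V) : edge (ρ.1 a) x = edge a x := by
  simpa only [ρ.2.2.1] using ρ.2.1 a x

def restrictCompl (ρ : AutG edge x y) : Equiv.Perm {v // v ≠ x} :=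
  ρ.1.subtypeEquiv fun _ => ρ.apply_ne_iff.symm

lemma restrictCompl_injective :
    Function.Injective (restrictCompl : AutG edge x y → Equiv.Perm {v // v ≠ x}) := by
  intro ρ σ h
  refine Subtype.ext (Equiv.ext fun v => ?_)
  by_cases hv : v = x
  · rw [hv, ρ.2.2.1, σ.2.2.1]
  · exact congrArg Subtype.val (Equiv.congr_fun h ⟨v, hv⟩)

lemma exists_restrictCompl_eq [DecidableEq V] (hx : ∀ w, edge x w = false) (hxy : x ≠ y)
    (σ : Equiv.Perm {v // v ≠ x}) (hσ : ∀ a b, edge (σ a) (σ b) = edge a b)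
    (hσx : ∀ a, edge (σ a) x = edge a x) (hσy : σ ⟨y, hxy.symm⟩ = ⟨y, hxy.symm⟩) :
    ∃ ρ : AutG edge x y, ρ.restrictCompl = σ := by
  have hfix : Equiv.Perm.ofSubtype σ x = x := Equiv.Perm.ofSubtype_apply_of_not_mem σ (by simp)
  have hedge (a b : V) :
      edge (Equiv.Perm.ofSubtype σ a) (Equiv.Perm.ofSubtype σ b) = edge a b := by
    by_cases ha : a = x
    · rw [ha, hfix, hx, hx]
    by_cases hb : b = x
    · rw [hb, hfix, Equiv.Perm.ofSubtype_apply_of_mem σ ha]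
      exact hσx ⟨a, ha⟩
    · rw [Equiv.Perm.ofSubtype_apply_of_mem σ ha, Equiv.Perm.ofSubtype_apply_of_mem σ hb]
      exact hσ ⟨a, ha⟩ ⟨b, hb⟩
  refine ⟨⟨Equiv.Perm.ofSubtype σ, hedge, hfix, ?_⟩, Equiv.ext fun a => Subtype.ext ?_⟩
  · rw [Equiv.Perm.ofSubtype_apply_of_mem σ hxy.symm, hσy]
  · exact Equiv.Perm.ofSubtype_apply_coe σ a

end AutG

section Insertion

variable {V₁ V₂ : Type} {e₁ : V₁ → V₁ → Bool} {e₂ : V₂ → V₂ → Bool}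
  {c1 c2 : V₁} {π : {a : V₁ // e₁ a c1 = true} → V₂}

lemma actIns_eq_self_iff (ρ₁ : AutG e₁ c1 c2) (ρ₂ : V₂ ≃ V₂) :
    actIns e₁ c1 c2 ρ₁ ρ₂ π = π ↔
      ∀ a (ha : e₁ a c1 = true),
        π ⟨ρ₁.1 a, (ρ₁.edge_apply_left a).trans ha⟩ = ρ₂ (π ⟨a, ha⟩) := by
  constructor
  · intro h a ha
    rw [← congrFun h ⟨ρ₁.1 a, _⟩]
    simp only [actIns, Equiv.symm_apply_apply]
  · intro h
    funext a
    simp only [actIns]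
    rw [← h]
    simp only [Equiv.apply_symm_apply]

def insPerm (ρ₁ : AutG e₁ c1 c2) (ρ₂ : V₂ ≃ V₂) : Equiv.Perm ({v : V₁ // v ≠ c1} ⊕ V₂) :=
  Equiv.sumCongr ρ₁.restrictCompl ρ₂

lemma insPerm_injective2 :
    Function.Injective2 (insPerm (e₁ := e₁) (c1 := c1) (c2 := c2) (V₂ := V₂)) := by
  intro ρ₁ σ₁ ρ₂ σ₂ h
  obtain ⟨h₁, h₂⟩ := Prod.mk_inj.1 (Equiv.Perm.sumCongrHom_injective h)
  exact ⟨AutG.restrictCompl_injective h₁, h₂⟩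

variable [DecidableEq V₂]

lemma edgeIns_inl_inr_eq_true_iff {a : {v : V₁ // v ≠ c1}} {w : V₂} :
    edgeIns e₁ e₂ c1 π (.inl a) (.inr w) = true ↔ ∃ h : e₁ a.1 c1 = true, π ⟨a.1, h⟩ = w := by
  by_cases h : e₁ a.1 c1 = true <;> simp [edgeIns, h]

lemma insPerm_preserves_edgeIns_iff (hc1 : e₁ c1 c1 = false)
    (ρ₁ : AutG e₁ c1 c2) (ρ₂ : V₂ ≃ V₂) :
    (∀ u v, edgeIns e₁ e₂ c1 π (insPerm ρ₁ ρ₂ u) (insPerm ρ₁ ρ₂ v) = edgeIns e₁ e₂ c1 π u v) ↔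
      (∀ w x, e₂ (ρ₂ w) (ρ₂ x) = e₂ w x) ∧ actIns e₁ c1 c2 ρ₁ ρ₂ π = π := by
  rw [actIns_eq_self_iff]
  constructor
  · intro h
    refine ⟨fun w x => h (.inr w) (.inr x), fun a ha => ?_⟩
    have ha1 : a ≠ c1 := by
      rintro rfl
      simp [hc1] at ha
    have hedge := h (.inl ⟨a, ha1⟩) (.inr (π ⟨a, ha⟩))
    rw [edgeIns_inl_inr_eq_true_iff.2 ⟨ha, rfl⟩] at hedge
    exact (edgeIns_inl_inr_eq_true_iff.1 hedge).2
  · rintro ⟨h₂, hstab⟩ (a | w) (b | x)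
    · exact ρ₁.2.1 a.1 b.1
    · show edgeIns e₁ e₂ c1 π (.inl (ρ₁.restrictCompl a)) (.inr (ρ₂ x)) = _
      refine Bool.eq_iff_iff.2 ?_
      rw [edgeIns_inl_inr_eq_true_iff, edgeIns_inl_inr_eq_true_iff]
      constructor
      · rintro ⟨h, hx⟩
        have ha : e₁ a.1 c1 = true := (ρ₁.edge_apply_left a.1).symm.trans h
        refine ⟨ha, ρ₂.injective ?_⟩
        rw [← hx, ← hstab a.1 ha]
        rfl
      · rintro ⟨ha, rfl⟩
        exact ⟨_, hstab a.1 ha⟩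
    · rfl
    · exact h₂ w x

lemma edge_apply_left_of_preserves_edgeIns {σ : Equiv.Perm {v : V₁ // v ≠ c1}} {τ : V₂ ≃ V₂}
    (h : ∀ u v, edgeIns e₁ e₂ c1 π (Equiv.sumCongr σ τ u) (Equiv.sumCongr σ τ v) =
      edgeIns e₁ e₂ c1 π u v)
    (a : {v : V₁ // v ≠ c1}) : e₁ (σ a).1 c1 = e₁ a.1 c1 := by
  have key (b : {v : V₁ // v ≠ c1}) :
      e₁ b.1 c1 = true ↔ ∃ w, edgeIns e₁ e₂ c1 π (.inl b) (.inr w) = true := by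
    simp only [edgeIns_inl_inr_eq_true_iff]
    exact ⟨fun hb => ⟨_, hb, rfl⟩, fun ⟨_, hb, _⟩ => hb⟩
  refine Bool.eq_iff_iff.2 ((key _).trans (Iff.trans ?_ (key a).symm))
  rw [← τ.exists_congr_right]
  exact exists_congr fun w => by rw [← h (.inl a) (.inr w)]; rfl

end Insertion

section Stabilizer

variable {V₁ V₂ : Type} [DecidableEq V₂] {e₁ : V₁ → V₁ → Bool} {e₂ : V₂ → V₂ → Bool}
  {c1 c2 : V₁} {d1 d2 : V₂} {π : {a : V₁ // e₁ a c1 = true} → V₂}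

lemma apply_inr_datum_of_preserves_edgeIns {φ : Equiv.Perm ({v : V₁ // v ≠ c1} ⊕ V₂)}
    (hφ : ∀ u v, edgeIns e₁ e₂ c1 π (φ u) (φ v) = edgeIns e₁ e₂ c1 π u v)
    (hφ₂ : ∀ w, ∃ x, φ (.inr w) = .inr x) (a b : {v : V₁ // v ≠ c1})
    (ha : e₁ a.1 c1 = true) (hb : e₁ b.1 c1 = true) (hab : φ (.inl a) = .inl b) :
    φ (.inr (π ⟨a.1, ha⟩)) = .inr (π ⟨b.1, hb⟩) := by
  obtain ⟨x, hx⟩ := hφ₂ (π ⟨a.1, ha⟩)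
  have hedge := hφ (.inl a) (.inr (π ⟨a.1, ha⟩))
  rw [hab, hx, edgeIns_inl_inr_eq_true_iff.2 ⟨ha, rfl⟩, edgeIns_inl_inr_eq_true_iff] at hedge
  rw [hx, hedge.2]

variable (e₁ e₂ c1 c2 d1 d2 π)

abbrev InsStab : Type :=
  {p : AutG e₁ c1 c2 × AutG e₂ d1 d2 // actIns e₁ c1 c2 p.1 p.2.1 π = π}

variable {e₁ e₂ c1 c2 d1 d2 π}

def InsStab.toAutFix (hc1 : e₁ c1 c1 = false) (hc : c1 ≠ c2)
    (p : InsStab e₁ e₂ c1 c2 d1 d2 π) : AutFix e₁ e₂ c1 c2 hc d1 d2 π :=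
  have hpres := (insPerm_preserves_edgeIns_iff hc1 p.1.1 p.1.2.1).2 ⟨p.1.2.2.1, p.2⟩
  have hinr (w : V₂) : ∃ x, insPerm p.1.1 p.1.2.1 (.inr w) = .inr x := ⟨_, rfl⟩
  ⟨insPerm p.1.1 p.1.2.1, hpres, congrArg Sum.inr p.1.2.2.2.1, congrArg Sum.inr p.1.2.2.2.2,
    congrArg Sum.inl (Subtype.ext p.1.1.2.2.2), hinr,
    apply_inr_datum_of_preserves_edgeIns hpres hinr⟩

lemma InsStab.toAutFix_injective (hc1 : e₁ c1 c1 = false) (hc : c1 ≠ c2) :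
    Function.Injective (InsStab.toAutFix (e₂ := e₂) (d1 := d1) (d2 := d2) (π := π) hc1 hc) := by
  intro p q h
  obtain ⟨h₁, h₂⟩ := insPerm_injective2 (congrArg Subtype.val h)
  exact Subtype.ext (Prod.ext h₁ (Subtype.ext h₂))

lemma InsStab.toAutFix_surjective [Fintype V₁] [Fintype V₂] [DecidableEq V₁]
    (hc1 : ∀ w, e₁ c1 w = false) (hc : c1 ≠ c2) :
    Function.Surjective
      (InsStab.toAutFix (e₂ := e₂) (d1 := d1) (d2 := d2) (π := π) (hc1 c1) hc) := by
  rintro ⟨φ, hpres, hd1, hd2, hc2, hinr, -⟩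
  have hmaps : Set.MapsTo φ (Set.range Sum.inr) (Set.range Sum.inr) := by
    rintro _ ⟨w, rfl⟩
    obtain ⟨x, hx⟩ := hinr w
    exact ⟨x, hx.symm⟩
  obtain ⟨⟨σ, τ⟩, rfl⟩ := Equiv.Perm.mem_sumCongrHom_range_of_perm_mapsTo_inl
    ((Equiv.Perm.perm_mapsTo_inl_iff_mapsTo_inr φ).2 hmaps)
  obtain ⟨ρ₁, rfl⟩ := AutG.exists_restrictCompl_eq hc1 hc σ
    (fun a b => hpres (.inl a) (.inl b)) (edge_apply_left_of_preserves_edgeIns hpres)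
    (Sum.inl_injective hc2)
  obtain ⟨he₂, hstab⟩ := (insPerm_preserves_edgeIns_iff (hc1 c1) ρ₁ τ).1 hpres
  exact ⟨⟨(ρ₁, ⟨τ, he₂, Sum.inr_injective hd1, Sum.inr_injective hd2⟩), hstab⟩, rfl⟩

end Stabilizer

theorem stmt_9_general {V₁ V₂ : Type}
    [Fintype V₁] [DecidableEq V₁] [Fintype V₂] [DecidableEq V₂]
    (e₁ : V₁ → V₁ → Bool) (c1 c2 : V₁) (hc : c1 ≠ c2) (h₁ : IsAdm e₁ {c1, c2})
    (e₂ : V₂ → V₂ → Bool) (d1 d2 : V₂)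
    (π : {a : V₁ // e₁ a c1 = true} → V₂) :
    Nonempty
      ({p : AutG e₁ c1 c2 × AutG e₂ d1 d2 // actIns e₁ c1 c2 p.1 p.2.1 π = π} ≃
        AutFix e₁ e₂ c1 c2 hc d1 d2 π) ∧
    Nat.card {p : AutG e₁ c1 c2 × AutG e₂ d1 d2 // actIns e₁ c1 c2 p.1 p.2.1 π = π} =
      Nat.card (AutFix e₁ e₂ c1 c2 hc d1 d2 π) := by
  have hc1 : ∀ w, e₁ c1 w = false := h₁.2.1 c1 (Finset.mem_insert_self c1 {c2})
  let e : InsStab e₁ e₂ c1 c2 d1 d2 π ≃ AutFix e₁ e₂ c1 c2 hc d1 d2 π :=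
    Equiv.ofBijective _
      ⟨InsStab.toAutFix_injective (hc1 c1) hc, InsStab.toAutFix_surjective hc1 hc⟩
  exact ⟨⟨e⟩, Nat.card_congr e⟩

/-- For an insertion datum `π` for `(Γ₁, Γ₂)`, the stabilizer of `π` under the
action of `Aut(Γ₁) × Aut(Γ₂)` is in bijection with `Aut(Γ_π, π)`, the group of automorphisms
of the resulting graph `Γ_π` fixing the insertion datum `π`; in particular the two have the
same cardinality. -/
theorem stmt_9 {V₁ V₂ : Type}
    [Fintype V₁] [DecidableEq V₁] [Fintype V₂] [DecidableEq V₂]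
    (e₁ : V₁ → V₁ → Bool) (c1 c2 : V₁) (hc : c1 ≠ c2) (h₁ : IsAdm e₁ {c1, c2})
    (e₂ : V₂ → V₂ → Bool) (d1 d2 : V₂) (hd : d1 ≠ d2) (h₂ : IsAdm e₂ {d1, d2})
    (π : {a : V₁ // e₁ a c1 = true} → V₂) :
    Nonempty
      ({p : AutG e₁ c1 c2 × AutG e₂ d1 d2 // actIns e₁ c1 c2 p.1 p.2.1 π = π} ≃
        AutFix e₁ e₂ c1 c2 hc d1 d2 π) ∧
    Nat.card {p : AutG e₁ c1 c2 × AutG e₂ d1 d2 // actIns e₁ c1 c2 p.1 p.2.1 π = π} =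
      Nat.card (AutFix e₁ e₂ c1 c2 hc d1 d2 π) :=
  stmt_9_general e₁ c1 c2 hc h₁ e₂ d1 d2 π
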